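/- Let the protocol transformation p → p' replace, for each subset I with |R_I| ≥ 2 and chosen distinct words u_I, v_I ∈ R_I, every query word u_i of type I by u_I when op_i ∈ {in, test+} and by v_I when op_i ∈ {out, test-}, leaving words in singleton elementary languages unchanged. Then each set content S'_k determined by p' contains at most one word from each elementary language R_I. -/
import Mathlib


/-- Operations with the set in a protocol. -/
inductive SAOp : Type
  | ins   -- `in`
  | del   -- `out`
  | testp -- `test+`
  | testm -- `test-`
deriving DecidableEq

/-- The sequence of set contents determined by a protocol `(u_i, op_i)`:
`S₀ = ∅`; `in` adds the query word, `out` removes it, tests leave the set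
unchanged.  `setContents u op i` is the set content after the first `i`
operations. -/
def setContents {Γ : Type} (u : ℕ → List Γ) (op : ℕ → SAOp) : ℕ → Set (List Γ)
  | 0 => ∅
  | i + 1 =>
    match op i with
    | SAOp.ins => setContents u op i ∪ {u i}
    | SAOp.del => setContents u op i \ {u i}
    | _ => setContents u op i

/-- A protocol of length `t` is correct if each `test+` query word is in the
current set content and each `test-` query word is not. -/
def CorrectProtocol {Γ : Type} (u : ℕ → List Γ) (op : ℕ → SAOp) (t : ℕ) : Prop :=
  ∀ i < t, (op i = SAOp.testp → u i ∈ setContents u op i) ∧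
           (op i = SAOp.testm → u i ∉ setContents u op i)

/-- Block `i` supports block `j`: same query word, `in`/`test+` or `out`/`test-`,
and no intermediate `in`/`out` block with the same query word. -/
def Supports {Γ : Type} (u : ℕ → List Γ) (op : ℕ → SAOp) (i j : ℕ) : Prop :=
  i < j ∧ u i = u j ∧
  ((op i = SAOp.ins ∧ op j = SAOp.testp) ∨ (op i = SAOp.del ∧ op j = SAOp.testm)) ∧
  ∀ k, i < k → k < j → u k = u i → op k ≠ SAOp.ins ∧ op k ≠ SAOp.del

/-- Block `j` (with operation `out` or `test-`) is standalone: it has no support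
and no earlier `in`-block has the same query word. -/
def Standalone {Γ : Type} (u : ℕ → List Γ) (op : ℕ → SAOp) (j : ℕ) : Prop :=
  (op j = SAOp.del ∨ op j = SAOp.testm) ∧
  (¬ ∃ i, Supports u op i j) ∧
  ∀ k < j, ¬ (u k = u j ∧ op k = SAOp.ins)

/-- The elementary language `R_I`: words belonging to exactly the `R(i)` with `i ∈ I`. -/
def elemLang {N : ℕ} {Γ : Type} (R : Fin N → Set (List Γ)) (I : Set (Fin N)) :
    Set (List Γ) :=
  (⋂ i ∈ I, R i) ∩ (⋂ i ∈ Iᶜ, (R i)ᶜ)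

/-- The type of a word: the set of indices of the languages containing it. -/
def wordType {N : ℕ} {Γ : Type} (R : Fin N → Set (List Γ)) (w : List Γ) :
    Set (Fin N) :=
  {i | w ∈ R i}

open Classical in
/-- The second protocol transformation `p → p''`: query words of type `I` with
`|R_I| ≥ 2` are replaced by the chosen word `u_I` in `in`/`test+` blocks and by
`v_I` in `out`/`test-` blocks; words in singleton elementary languages are
unchanged; operations are unchanged. -/
noncomputable def transformWord {N : ℕ} {Γ : Type} (R : Fin N → Set (List Γ))
    (uI vI : Set (Fin N) → List Γ) (u : ℕ → List Γ) (op : ℕ → SAOp) (i : ℕ) :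
    List Γ :=
  if (elemLang R (wordType R (u i))).Subsingleton then u i
  else if op i = SAOp.ins ∨ op i = SAOp.testp then uI (wordType R (u i))
  else vI (wordType R (u i))

lemma mem_setContents_exists {Γ : Type} (u : ℕ → List Γ) (op : ℕ → SAOp) :
    ∀ k w, w ∈ setContents u op k → ∃ i, op i = SAOp.ins ∧ w = u i := by
  intro k
  induction k with
  | zero => intro w hw; exact absurd hw (by simp [setContents])
  | succ n ih =>
    intro w hw
    unfold setContents at hw
    rcases h : op n with _ | _ | _ | _ <;> rw [h] at hw
    · rcases hw with hw | hw
      · exact ih w hw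
      · exact ⟨n, h, hw⟩
    · exact ih w hw.1
    · exact ih w hw
    · exact ih w hw

lemma wordType_eq_of_mem_elemLang {N : ℕ} {Γ : Type} (R : Fin N → Set (List Γ))
    {I : Set (Fin N)} {w : List Γ} (hw : w ∈ elemLang R I) : wordType R w = I := by
  obtain ⟨h1, h2⟩ := hw
  simp only [Set.mem_iInter] at h1 h2
  ext i
  constructor
  · intro hi
    by_contra hni
    exact h2 i hni hi
  · intro hi
    exact h1 i hi

/-- after the transformation, each set content determined by the
transformed protocol contains at most one word from each elementary language. -/
theorem transformed_setContents_subsingleton {N : ℕ} {Γ : Type} [Finite Γ]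
    (R : Fin N → Set (List Γ)) (uI vI : Set (Fin N) → List Γ)
    (hchoice : ∀ I : Set (Fin N), ¬ (elemLang R I).Subsingleton →
      uI I ∈ elemLang R I ∧ vI I ∈ elemLang R I ∧ uI I ≠ vI I)
    (u : ℕ → List Γ) (op : ℕ → SAOp) :
    ∀ (k : ℕ) (I : Set (Fin N)),
      (setContents (transformWord R uI vI u op) op k ∩ elemLang R I).Subsingleton := by
  intro k I
  by_cases hs : (elemLang R I).Subsingleton
  · intro w1 hw1 w2 hw2
    exact hs hw1.2 hw2.2
  · -- every such word equals uI I
    have key : ∀ w ∈ setContents (transformWord R uI vI u op) op k ∩ elemLang R I,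
        w = uI I := by
      rintro w ⟨hwS, hwI⟩
      obtain ⟨i, hop, hw⟩ := mem_setContents_exists _ _ k w hwS
      have htyw : wordType R w = I := wordType_eq_of_mem_elemLang R hwI
      unfold transformWord at hw
      split_ifs at hw with h1 h2
      · -- w = u i, so wordType w = wordType (u i), contradiction with hs
        rw [← hw, htyw] at h1
        exact absurd h1 hs
      · -- w = uI J with elemLang J not subsingleton
        have huIJ := (hchoice _ h1).1
        have : wordType R w = wordType R (u i) := by
          rw [hw]; exact wordType_eq_of_mem_elemLang R huIJ
        rw [hw, ← htyw, this]
      · exact absurd (Or.inl hop) h2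
    intro w1 hw1 w2 hw2
    rw [key w1 hw1, key w2 hw2]
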